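/- Let ε > 0 and q_1, q_2 > 0 with q_1 > 1 and 1 + ε(q_2 − 1) > 0, and define β* = (q_1 − 1 + ε)/(1 + ε(q_2 − 1)), x_1* = q_1/(1 + β*), x_2* = q_2 β*/(1 + β*), and λ = ε(q_1 + q_2 − q_1 q_2)/(q_1 + ε q_2). Then 1 − x_1* = λ and ε(1 − x_2*) = λ; that is, at the diverging solution of the two-mutant system both viral mutants grow exponentially with the same effective rate λ. -/
import Mathlib


/-- At the diverging solution of the two-mutant system, both mutants grow with
the same effective rate `λ`: `1 - x₁* = λ` and `ε(1 - x₂*) = λ`. -/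
theorem stmt_14 (ε q₁ q₂ : ℝ) (hε : 0 < ε) (hq₁ : 0 < q₁) (hq₂ : 0 < q₂)
    (hq₁1 : 1 < q₁) (hden : 0 < 1 + ε * (q₂ - 1))
    (βs x₁s x₂s lam : ℝ)
    (hβ : βs = (q₁ - 1 + ε) / (1 + ε * (q₂ - 1)))
    (hx₁ : x₁s = q₁ / (1 + βs))
    (hx₂ : x₂s = q₂ * βs / (1 + βs))
    (hlam : lam = ε * (q₁ + q₂ - q₁ * q₂) / (q₁ + ε * q₂)) :
    1 - x₁s = lam ∧ ε * (1 - x₂s) = lam := by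
  have hd : (1 + ε * (q₂ - 1)) ≠ 0 := ne_of_gt hden
  have hnum : 0 < q₁ - 1 + ε := by linarith
  have hβpos : 0 < βs := by rw [hβ]; positivity
  have h1β : (1 + βs) ≠ 0 := by positivity
  have hq : (q₁ + ε * q₂) ≠ 0 := by positivity
  subst hβ hx₁ hx₂ hlam
  constructor <;> field_simp <;> ring
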